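/- Let n ≥ 1 and let Δ ⊂ ℝ^n be the root system of osp(1|2n), namely Δ := {±δ_k ± δ_l : 1 ≤ k ≠ l ≤ n} ∪ {±2δ_k : 1 ≤ k ≤ n} ∪ {±δ_k : 1 ≤ k ≤ n}. Then there exists no cominuscule parabolic set of roots of Δ. -/

import Mathlib

/-!
Every short root `±δ_k` of `osp(1|2n)` has its double `±2δ_k` again a root. In a cominuscule
parabolic set `P` a root `α ∈ P` with `2α` a root cannot lie in the nilradical, so `-α ∈ P` as
well; hence all short roots lie in `P`. But every root is a short root or a sum of two short
roots, so closure of `P` under root sums forces `P = Δ`, contradicting `P ⊊ Δ`.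
-/

open Pointwise

/-- A proper subset `P` of a symmetric root set `Δ` is a parabolic set of roots if
`Δ = P ∪ (-P)` and `P` is closed under sums lying in `Δ`. -/
def IsParabolic {V : Type*} [AddCommGroup V] (Δ P : Set V) : Prop :=
  P ⊂ Δ ∧ Δ = P ∪ (-P) ∧ ∀ α ∈ P, ∀ β ∈ P, α + β ∈ Δ → α + β ∈ P

/-- A parabolic set of roots is cominuscule if the sum of any two elements of its
nilradical `N⁺ = P \ (-P)` is not a root. -/
def IsCominuscule {V : Type*} [AddCommGroup V] (Δ P : Set V) : Prop :=
  IsParabolic Δ P ∧ ∀ α ∈ P \ (-P), ∀ β ∈ P \ (-P), α + β ∉ Δ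

namespace Osp1

variable (n : ℕ)

noncomputable def δ (k : Fin n) : Fin n → ℝ := Pi.single k 1

/-- The root system of `osp(1|2n)`. -/
noncomputable def Δroot : Set (Fin n → ℝ) :=
  {v | ∃ k l : Fin n, k ≠ l ∧
      (v = δ n k + δ n l ∨ v = δ n k - δ n l ∨ v = -δ n k + δ n l ∨ v = -δ n k - δ n l)} ∪
  {v | ∃ k : Fin n, v = (2 : ℝ) • δ n k ∨ v = -((2 : ℝ) • δ n k)} ∪
  {v | ∃ k : Fin n, v = δ n k ∨ v = -δ n k}

end Osp1

section

variable {V : Type*} [AddCommGroup V] {Δ P : Set V}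

theorem IsParabolic.neg_mem (hP : IsParabolic Δ P) {α : V} (hα : α ∈ Δ) : -α ∈ Δ := by
  rw [hP.2.1] at hα ⊢
  rcases hα with hα | hα
  · exact Or.inr (Set.neg_mem_neg.mpr hα)
  · exact Or.inl (Set.mem_neg.mp hα)

theorem IsParabolic.not_subset_of_subset_union_add (hP : IsParabolic Δ P) {S : Set V}
    (hΔ : Δ ⊆ S ∪ (S + S)) : ¬ S ⊆ P := by
  intro hS
  refine hP.1.2 fun v hv => ?_
  rcases hΔ hv with hv' | ⟨a, ha, b, hb, rfl⟩
  · exact hS hv'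
  · exact hP.2.2 a (hS ha) b (hS hb) hv

theorem IsCominuscule.neg_mem_of_add_self_mem (hP : IsCominuscule Δ P) {α : V} (hα : α ∈ P)
    (h2α : α + α ∈ Δ) : -α ∈ P := by
  by_contra h
  have hN : α ∈ P \ (-P) := ⟨hα, fun h' => h (Set.mem_neg.mp h')⟩
  exact hP.2 α hN α hN h2α

theorem IsCominuscule.mem_and_neg_mem (hP : IsCominuscule Δ P) {α : V} (hα : α ∈ Δ)
    (h2α : α + α ∈ Δ) : α ∈ P ∧ -α ∈ P := by
  rcases hP.1.2.1 ▸ hα with hα | hα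
  · exact ⟨hα, hP.neg_mem_of_add_self_mem hα h2α⟩
  · have hα' : -α ∈ P := Set.mem_neg.mp hα
    have h2α' : -α + -α ∈ Δ := by rw [← neg_add]; exact hP.1.neg_mem h2α
    exact ⟨by simpa using hP.neg_mem_of_add_self_mem hα' h2α', hα'⟩

end

namespace Osp1

variable (n : ℕ)

noncomputable def shortRoots : Set (Fin n → ℝ) := {v | ∃ k : Fin n, v = δ n k ∨ v = -δ n k}

theorem shortRoots_subset_Δroot : shortRoots n ⊆ Δroot n := fun _ hv => Or.inr hv

theorem add_self_mem_Δroot {v : Fin n → ℝ} (hv : v ∈ shortRoots n) : v + v ∈ Δroot n := by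
  obtain ⟨k, rfl | rfl⟩ := hv
  · exact Or.inl (Or.inr ⟨k, Or.inl (two_smul ℝ _).symm⟩)
  · exact Or.inl (Or.inr ⟨k, Or.inr (by rw [two_smul, neg_add])⟩)

theorem Δroot_subset_union_add : Δroot n ⊆ shortRoots n ∪ (shortRoots n + shortRoots n) := by
  have pos (k : Fin n) : δ n k ∈ shortRoots n := ⟨k, Or.inl rfl⟩
  have neg (k : Fin n) : -δ n k ∈ shortRoots n := ⟨k, Or.inr rfl⟩
  rintro v ((⟨k, l, -, rfl | rfl | rfl | rfl⟩ | ⟨k, rfl | rfl⟩) | hv)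
  · exact Or.inr ⟨_, pos k, _, pos l, rfl⟩
  · exact Or.inr ⟨_, pos k, _, neg l, (sub_eq_add_neg _ _).symm⟩
  · exact Or.inr ⟨_, neg k, _, pos l, rfl⟩
  · exact Or.inr ⟨_, neg k, _, neg l, (sub_eq_add_neg _ _).symm⟩
  · exact Or.inr ⟨_, pos k, _, pos k, (two_smul ℝ _).symm⟩
  · exact Or.inr ⟨_, neg k, _, neg k, by rw [two_smul, neg_add]⟩
  · exact Or.inl hv

end Osp1

theorem stmt_6_general (n : ℕ) :
    ¬ ∃ P : Set (Fin n → ℝ), IsCominuscule (Osp1.Δroot n) P := by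
  rintro ⟨P, hP⟩
  refine hP.1.not_subset_of_subset_union_add (Osp1.Δroot_subset_union_add n) fun v hv => ?_
  exact (hP.mem_and_neg_mem (Osp1.shortRoots_subset_Δroot n hv)
    (Osp1.add_self_mem_Δroot n hv)).1

theorem stmt_6 (n : ℕ) (hn : 1 ≤ n) :
    ¬ ∃ P : Set (Fin n → ℝ), IsCominuscule (Osp1.Δroot n) P :=
  stmt_6_general n
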